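/- Equivalent deadline policy: Suppose Ξ dominates Ξ'. Define the deadline policy D(x̄) := τ_Ξ'(x̄) (the inter-event time of Ξ' from sampling state x̄). Then for any trajectory, the triggering time generated by the deadline-augmented scheme t_{i+1} = min{ inf{ t ≥ t_i : Ξ(x(t), x(t_i)) ≥ 0 }, t_i + D(x(t_i)) } equals the triggering time generated by Ξ' alone, t_{i+1} = inf{ t ≥ t_i : Ξ'(x(t), x(t_i)) ≥ 0 }. -/
import Mathlib

/-- Equivalent deadline policy: if Ξ dominates Ξ', the deadline policy
`D(x̄) = τ_Ξ'(x̄)` makes the deadline-augmented scheme with Ξ trigger at exactly the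
time that Ξ' alone would trigger. Infima are attained/nonempty as assumed in context. -/
theorem equivalent_deadline_policy {n : ℕ}
    (Ξ Ξ' : (Fin n → ℝ) → (Fin n → ℝ) → ℝ)
    (hdom : ∀ x y : Fin n → ℝ, Ξ' x y < 0 → Ξ x y < 0)
    (x : ℝ → (Fin n → ℝ)) (ti : ℝ)
    (hne : {t : ℝ | ti ≤ t ∧ 0 ≤ Ξ (x t) (x ti)}.Nonempty)
    (hattained :
      sInf {t : ℝ | ti ≤ t ∧ 0 ≤ Ξ' (x t) (x ti)} ∈ {t : ℝ | ti ≤ t ∧ 0 ≤ Ξ' (x t) (x ti)}) :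
    min (sInf {t : ℝ | ti ≤ t ∧ 0 ≤ Ξ (x t) (x ti)})
        (ti + (sInf {t : ℝ | ti ≤ t ∧ 0 ≤ Ξ' (x t) (x ti)} - ti))
      = sInf {t : ℝ | ti ≤ t ∧ 0 ≤ Ξ' (x t) (x ti)} := by
  have hsub : {t : ℝ | ti ≤ t ∧ 0 ≤ Ξ (x t) (x ti)} ⊆
      {t : ℝ | ti ≤ t ∧ 0 ≤ Ξ' (x t) (x ti)} := by
    intro t ht
    refine ⟨ht.1, ?_⟩
    by_contra h
    exact absurd (hdom _ _ (lt_of_not_ge h)) (not_lt.2 ht.2)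
  have hbdd : BddBelow {t : ℝ | ti ≤ t ∧ 0 ≤ Ξ' (x t) (x ti)} :=
    ⟨ti, fun t ht => ht.1⟩
  have hle : sInf {t : ℝ | ti ≤ t ∧ 0 ≤ Ξ' (x t) (x ti)} ≤
      sInf {t : ℝ | ti ≤ t ∧ 0 ≤ Ξ (x t) (x ti)} :=
    csInf_le_csInf hbdd hne hsub
  rw [add_sub_cancel]
  exact min_eq_right hle
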